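/- arXiv:gr-qc/0501055 — 4 statements merged into one kernel-verified Lean document; each statement's English description precedes it below -/
import Mathlib

section
/- For all real numbers a ≥ 0, w ≥ 0 and θ ∈ [0, π], setting m = a·w·sin θ and s = a² + w², if m > 0 and a ≠ w, then ψ(s, m)·m < 1, where ψ(s, m) = (s − √(s² − 4m²)) / (2m²). (This is the key estimate ensuring that the C̄-simultaneity connection ω̄ = u + ψ·m_α is timelike on the set U = {m > 0, a ≠ w}.) -/
/-- For all real `a ≥ 0`, `w ≥ 0` and `θ ∈ [0, π]`, setting `m = a·w·sin θ` and
`s = a² + w²`, if `m > 0` and `a ≠ w` then `ψ(s, m)·m < 1`, where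
`ψ(s, m) = (s − √(s² − 4m²)) / (2m²)`. -/
theorem stmt_4 (a w θ : ℝ) (ha : 0 ≤ a) (hw : 0 ≤ w) (hθ : θ ∈ Set.Icc 0 Real.pi)
    (hm : 0 < a * w * Real.sin θ) (haw : a ≠ w) :
    let m := a * w * Real.sin θ
    let s := a ^ 2 + w ^ 2
    ((s - Real.sqrt (s ^ 2 - 4 * m ^ 2)) / (2 * m ^ 2)) * m < 1 := by
  intro m s
  have hmd : m = a * w * Real.sin θ := rfl
  have hsd : s = a ^ 2 + w ^ 2 := rfl
  have hm0 : 0 < m := hm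
  have hsin : Real.sin θ ≤ 1 := Real.sin_le_one θ
  have hmle : m ≤ a * w := by
    rw [hmd]
    exact mul_le_of_le_one_right (mul_nonneg ha hw) hsin
  have h1 : 0 < (a - w) ^ 2 := by
    have hne := sub_ne_zero.mpr haw
    positivity
  have h2m : 2 * m < s := by nlinarith [hmle, h1, hsd]
  have hkey : s - 2 * m < Real.sqrt (s ^ 2 - 4 * m ^ 2) := by
    have hlt : (s - 2 * m) ^ 2 < s ^ 2 - 4 * m ^ 2 := by nlinarith
    exact (Real.lt_sqrt (by linarith : (0:ℝ) ≤ s - 2 * m)).mpr hlt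
  have hm2 : (0:ℝ) < 2 * m ^ 2 := by positivity
  rw [div_mul_eq_mul_div, div_lt_one hm2]
  have h3 : s - Real.sqrt (s ^ 2 - 4 * m ^ 2) < 2 * m := by linarith
  nlinarith [mul_lt_mul_of_pos_right h3 hm0]
end

section
/- For all real numbers a ≥ 0, w ≥ 0 and θ ∈ [0, π], setting m = a·w·sin θ and s = a² + w², if m > 0 then the other root of the quadratic m²x² − sx + 1 = 0, namely ψ⁺(s, m) = (s + √(s² − 4m²)) / (2m²), satisfies ψ⁺(s, m)·m ≥ 1. (Hence choosing the plus sign in equation (4) would never yield a timelike connection, justifying the minus sign in the C̄-simultaneity coefficient.) -/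
/-- For all real `a ≥ 0`, `w ≥ 0` and `θ ∈ [0, π]`, setting `m = a·w·sin θ` and
`s = a² + w²`, if `m > 0` then `ψ⁺(s, m) = (s + √(s² − 4m²)) / (2m²)` satisfies
`ψ⁺(s, m)·m ≥ 1`. -/
theorem stmt_6 (a w θ : ℝ) (ha : 0 ≤ a) (hw : 0 ≤ w) (hθ : θ ∈ Set.Icc 0 Real.pi)
    (hm : 0 < a * w * Real.sin θ) :
    let m := a * w * Real.sin θ
    let s := a ^ 2 + w ^ 2
    ((s + Real.sqrt (s ^ 2 - 4 * m ^ 2)) / (2 * m ^ 2)) * m ≥ 1 := by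
  intro m s
  have hsin : Real.sin θ ≤ 1 := Real.sin_le_one θ
  have hm' : 0 < m := hm
  have hs2m : 2 * m ≤ s := by
    have haw : 0 ≤ a * w := mul_nonneg ha hw
    show 2 * (a * w * Real.sin θ) ≤ a ^ 2 + w ^ 2
    nlinarith [sq_nonneg (a - w), mul_le_of_le_one_right haw hsin]
  have hsqrt : 0 ≤ Real.sqrt (s ^ 2 - 4 * m ^ 2) := Real.sqrt_nonneg _
  have hm2 : 0 < 2 * m ^ 2 := by positivity
  rw [ge_iff_le, div_mul_eq_mul_div, le_div_iff₀ hm2]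
  nlinarith
end

section
/- The function g : ℝ² → ℝ defined by g(s, m) = (s − √(s² − 4m²)) / (2m²) for m ≠ 0 and g(s, 0) = 1/s is continuous on the set {(s, m) : s > 0 and s² > 4m²}. (This is the continuity of the extended C̄-simultaneity coefficient on the set C = A − B, where A = {a² + w² > 0} and B = {a = w ≠ 0, θ = π/2}.) -/
/-- The function `g : ℝ² → ℝ` defined by `g(s, m) = (s − √(s² − 4m²)) / (2m²)` for `m ≠ 0`
and `g(s, 0) = 1/s` is continuous on the set `{(s, m) : s > 0 ∧ s² > 4m²}`. -/
theorem stmt_10 :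
    ContinuousOn
      (fun p : ℝ × ℝ =>
        if p.2 ≠ 0 then (p.1 - Real.sqrt (p.1 ^ 2 - 4 * p.2 ^ 2)) / (2 * p.2 ^ 2)
        else 1 / p.1)
      {p : ℝ × ℝ | 0 < p.1 ∧ p.1 ^ 2 > 4 * p.2 ^ 2} := by
  have key : ContinuousOn
      (fun p : ℝ × ℝ => 2 / (p.1 + Real.sqrt (p.1 ^ 2 - 4 * p.2 ^ 2)))
      {p : ℝ × ℝ | 0 < p.1 ∧ p.1 ^ 2 > 4 * p.2 ^ 2} := by
    apply ContinuousOn.div continuousOn_const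
    · exact (continuous_fst.add ((Real.continuous_sqrt).comp
        ((continuous_fst.pow 2).sub (continuous_const.mul (continuous_snd.pow 2))))).continuousOn
    · intro p hp
      have h1 : (0:ℝ) ≤ Real.sqrt (p.1 ^ 2 - 4 * p.2 ^ 2) := Real.sqrt_nonneg _
      nlinarith [hp.1]
  apply key.congr
  intro p hp
  obtain ⟨hs, hd⟩ := hp
  have hdnn : (0:ℝ) ≤ p.1 ^ 2 - 4 * p.2 ^ 2 := by linarith
  have hsq : Real.sqrt (p.1 ^ 2 - 4 * p.2 ^ 2) ^ 2 = p.1 ^ 2 - 4 * p.2 ^ 2 :=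
    Real.sq_sqrt hdnn
  have hden : p.1 + Real.sqrt (p.1 ^ 2 - 4 * p.2 ^ 2) ≠ 0 := by
    nlinarith [Real.sqrt_nonneg (p.1 ^ 2 - 4 * p.2 ^ 2)]
  by_cases hm : p.2 = 0
  · simp only [hm, ne_eq, not_true_eq_false, if_false]
    have : Real.sqrt (p.1 ^ 2 - 4 * (0:ℝ) ^ 2) = p.1 := by
      rw [show p.1 ^ 2 - 4 * (0:ℝ) ^ 2 = p.1 ^ 2 by ring, Real.sqrt_sq hs.le]
    rw [this]
    rw [div_eq_div_iff hs.ne' (by linarith)]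
    ring
  · simp only [ne_eq, hm, not_false_eq_true, if_true]
    rw [div_eq_div_iff (by positivity) hden]
    nlinarith [hsq]
end

section
/- Let η be the Minkowski bilinear form on ℝ⁴ given by η(x, y) = x₀y₀ − x₁y₁ − x₂y₂ − x₃y₃. Let a ≥ 0, w ≥ 0, θ ∈ [0, π] with m = a·w·sin θ > 0 and a ≠ w, and set s = a² + w² and ψ = (s − √(s² − 4m²)) / (2m²). If u, M ∈ ℝ⁴ satisfy η(u, u) = 1, η(u, M) = 0 and η(M, M) = −m², then the vector ω̄ = u + ψ·M satisfies η(ω̄, ω̄) = 1 − ψ²m² > 0; that is, ω̄ is timelike. (This is the 'timelike in U' conclusion of Theorem 1 for the C̄-simultaneity connection ω̄_α = u_α + ψ·m_α.) -/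
/-- Minkowski bilinear form on `ℝ⁴` with signature `(+,−,−,−)`. -/
def minkowski (x y : Fin 4 → ℝ) : ℝ :=
  x 0 * y 0 - x 1 * y 1 - x 2 * y 2 - x 3 * y 3

/-- Let `a ≥ 0`, `w ≥ 0`, `θ ∈ [0, π]` with `m = a·w·sin θ > 0` and `a ≠ w`, and set
`s = a² + w²`, `ψ = (s − √(s² − 4m²)) / (2m²)`. If `u, M ∈ ℝ⁴` satisfy `η(u,u) = 1`,
`η(u,M) = 0` and `η(M,M) = −m²`, then `ω̄ = u + ψ·M` satisfies
`η(ω̄, ω̄) = 1 − ψ²m² > 0`, i.e. `ω̄` is timelike. -/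
theorem stmt_12 (a w θ : ℝ) (ha : 0 ≤ a) (hw : 0 ≤ w) (hθ : θ ∈ Set.Icc 0 Real.pi)
    (hm : 0 < a * w * Real.sin θ) (haw : a ≠ w)
    (u M : Fin 4 → ℝ)
    (hu : minkowski u u = 1)
    (huM : minkowski u M = 0)
    (hM : minkowski M M = -(a * w * Real.sin θ) ^ 2) :
    let m := a * w * Real.sin θ
    let s := a ^ 2 + w ^ 2
    let ψ := (s - Real.sqrt (s ^ 2 - 4 * m ^ 2)) / (2 * m ^ 2)
    let ω := u + ψ • M
    minkowski ω ω = 1 - ψ ^ 2 * m ^ 2 ∧ 0 < minkowski ω ω := by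
  intro m s ψ ω
  have hmdef : m = a * w * Real.sin θ := rfl
  have hsdef : s = a ^ 2 + w ^ 2 := rfl
  have hmpos : 0 < m := hm
  have hapos : 0 < a := lt_of_le_of_ne ha (by rintro rfl; simp at hm)
  have hwpos : 0 < w := lt_of_le_of_ne hw (by rintro rfl; simp at hm)
  have hspos : 0 < s := by rw [hsdef]; positivity
  have hsin : Real.sin θ ≤ 1 := Real.sin_le_one θ
  have hmle : m ≤ a * w := by rw [hmdef]; nlinarith [mul_pos hapos hwpos]
  have hsq : 0 < s ^ 2 - 4 * m ^ 2 := by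
    have h2 : a ^ 2 ≠ w ^ 2 := by
      intro h
      exact haw (by nlinarith [sq_nonneg (a - w), sq_nonneg (a + w)])
    have h4 : a ^ 2 - w ^ 2 ≠ 0 := sub_ne_zero.mpr h2
    have h3 : 0 < (a ^ 2 - w ^ 2) ^ 2 :=
      lt_of_le_of_ne (sq_nonneg _) (Ne.symm (pow_ne_zero 2 h4))
    have h1 : (a ^ 2 - w ^ 2) ^ 2 ≤ s ^ 2 - 4 * m ^ 2 := by
      have hm2 : m ^ 2 ≤ (a * w) ^ 2 := by nlinarith
      rw [hsdef]; nlinarith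
    linarith
  set r := Real.sqrt (s ^ 2 - 4 * m ^ 2) with hr
  have hrpos : 0 < r := Real.sqrt_pos.mpr hsq
  have hr2 : r ^ 2 = s ^ 2 - 4 * m ^ 2 := Real.sq_sqrt (le_of_lt hsq)
  have hrlt : r < s := by nlinarith
  have hψpos : 0 < ψ := by
    apply div_pos (by linarith) (by positivity)
  have hψm : ψ ^ 2 * m ^ 2 < 1 := by
    have hψ : ψ = (s - r) / (2 * m ^ 2) := rfl
    rw [hψ, div_pow, div_mul_eq_mul_div, div_lt_one (by positivity)]
    nlinarith [mul_pos (mul_pos (mul_pos hmpos hmpos) (sub_pos.mpr hrlt)) hrpos,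
      sub_pos.mpr hrlt]
  have heq : minkowski ω ω = 1 - ψ ^ 2 * m ^ 2 := by
    have hex : minkowski ω ω = minkowski u u + 2 * ψ * minkowski u M + ψ ^ 2 * minkowski M M := by
      simp only [ω, minkowski, Pi.add_apply, Pi.smul_apply, smul_eq_mul]
      ring
    rw [hex, hu, huM, hM, ← hmdef]
    ring
  exact ⟨heq, by rw [heq]; linarith⟩
end
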